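/- The complex polynomials H_{n,m}^{(β)}(z, z̄) := (1/m!) ∑_{k=0}^{m} C(m,k) ((β+1)_n/(β+1)_{n-k}) (-1)^k z^{n-k} z̄^{m-k} satisfy, for n ≥ m, the identity H_{n,m}^{(β)}(z, z̄) = (-1)^m z^{n-m} L_m^{(β+n-m)}(z z̄), where L_m^{(α)} is the generalized Laguerre polynomial. -/
import Mathlib


/-- Rising factorial (Pochhammer symbol) (a)_k for real a. -/
noncomputable def poch (a : ℝ) (k : ℕ) : ℝ := (ascPochhammer ℝ k).eval a

/-- Generalized Laguerre polynomial L_m^{(α)}(x) = ∑_{k=0}^m (α+k+1)_{m-k}/(m-k)! (-x)^k/k!,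
evaluated at a complex argument. -/
noncomputable def lag (α : ℝ) (m : ℕ) (x : ℂ) : ℂ :=
  ∑ k ∈ Finset.range (m + 1),
    ((poch (α + k + 1) (m - k) / Nat.factorial (m - k) : ℝ) : ℂ)
      * (-x) ^ k / (Nat.factorial k : ℂ)

/-- The complex polynomials
H_{n,m}^{(β)}(z,z̄) = (1/m!) ∑_{k=0}^m C(m,k) ((β+1)_n/(β+1)_{n-k}) (-1)^k z^{n-k} z̄^{m-k}. -/
noncomputable def Hgen (β : ℝ) (n m : ℕ) (z : ℂ) : ℂ :=
  (1 / (Nat.factorial m : ℂ)) * ∑ k ∈ Finset.range (m + 1),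
    (Nat.choose m k : ℂ) * ((poch (β + 1) n / poch (β + 1) (n - k) : ℝ) : ℂ)
      * (-1) ^ k * z ^ (n - k) * (starRingEnd ℂ z) ^ (m - k)

lemma poch_add (a : ℝ) (i j : ℕ) : poch a (i + j) = poch a i * poch (a + i) j := by
  simp [poch, ← ascPochhammer_mul, Polynomial.eval_mul, Polynomial.eval_comp]

lemma poch_pos (a : ℝ) (ha : 0 < a) (k : ℕ) : 0 < poch a k :=
  ascPochhammer_pos k a ha

/-- For n ≥ m, H_{n,m}^{(β)}(z,z̄) = (-1)^m z^{n-m} L_m^{(β+n-m)}(z z̄). -/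
theorem Hgen_eq_laguerre (β : ℝ) (hβ : 0 ≤ β) (n m : ℕ) (hmn : m ≤ n) (z : ℂ) :
    Hgen β n m z
      = (-1 : ℂ) ^ m * z ^ (n - m) * lag (β + n - m) m (z * starRingEnd ℂ z) := by
  unfold Hgen lag
  rw [Finset.mul_sum]
  conv_rhs => rw [mul_assoc, Finset.mul_sum, Finset.mul_sum]
  conv_rhs => rw [← Finset.sum_range_reflect (fun j => (-1 : ℂ) ^ m * (z ^ (n - m) *
      (((poch (β + ↑n - ↑m + ↑j + 1) (m - j) / ((m - j).factorial : ℝ) : ℝ) : ℂ)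
        * (-(z * starRingEnd ℂ z)) ^ j / (j.factorial : ℂ)))) (m + 1)]
  refine Finset.sum_congr rfl fun k hk => ?_
  rw [Finset.mem_range] at hk
  have hk' : k ≤ m := Nat.lt_succ_iff.mp hk
  have hkn : k ≤ n := hk'.trans hmn
  -- index simplifications
  have e1 : m + 1 - 1 - k = m - k := by omega
  have e2 : m - (m - k) = k := by omega
  rw [e1, e2]
  -- Pochhammer factorization
  have hsplit : poch (β + 1) n = poch (β + 1) (n - k) * poch (β + 1 + ((n - k : ℕ) : ℝ)) k := by
    rw [← poch_add]; congr 1; omega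
  have hne : poch (β + 1) (n - k) ≠ 0 :=
    ne_of_gt (poch_pos _ (by linarith) _)
  have hα : β + (n : ℝ) - m + (m - k : ℕ) + 1 = β + 1 + ((n - k : ℕ) : ℝ) := by
    have : ((m - k : ℕ) : ℝ) = (m : ℝ) - k := by
      push_cast [Nat.cast_sub hk']; ring
    rw [this, Nat.cast_sub hkn]; ring
  rw [hα, hsplit]
  -- powers of z
  have hz : z ^ (n - m) * z ^ (m - k) = z ^ (n - k) := by
    rw [← pow_add]; congr 1; omega
  have hneg : (-(z * starRingEnd ℂ z)) ^ (m - k)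
      = (-1 : ℂ) ^ (m - k) * z ^ (m - k) * (starRingEnd ℂ z) ^ (m - k) := by
    rw [neg_eq_neg_one_mul, mul_pow, mul_pow]; ring
  have hsign : (-1 : ℂ) ^ m * (-1 : ℂ) ^ (m - k) = (-1 : ℂ) ^ k := by
    rw [← pow_add]
    have : m + (m - k) = 2 * (m - k) + k := by omega
    rw [this, pow_add, pow_mul]
    norm_num
  -- factorial/choose identity
  have hfac : (m.choose k : ℂ) * (k.factorial : ℂ) * ((m - k).factorial : ℂ)
      = (m.factorial : ℂ) := by
    norm_cast
    exact Nat.choose_mul_factorial_mul_factorial hk'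
  have hkf : (k.factorial : ℂ) ≠ 0 := Nat.cast_ne_zero.mpr k.factorial_ne_zero
  have hmkf : ((m - k).factorial : ℂ) ≠ 0 := Nat.cast_ne_zero.mpr (m - k).factorial_ne_zero
  have hmf : (m.factorial : ℂ) ≠ 0 := Nat.cast_ne_zero.mpr m.factorial_ne_zero
  have hneC : ((poch (β + 1) (n - k) : ℝ) : ℂ) ≠ 0 := by
    exact_mod_cast hne
  push_cast
  rw [hneg]
  field_simp
  rw [← hz, ← hsign, ← hfac]
  ring
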